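/- Let F be a field with char F ≠ 2, δ ∈ F with δ ≠ 1 and δ ≠ −1, and assume the polynomial x² − 2δx + 1 has its roots ζ and ζ⁻¹ in F. Then there exist linearly independent elements s, t of the subspace V of 𝔖(δ) with s·s = 0 and t·t = 0, and every element w of 𝔖(δ) with w·w = 0 lies in F·s ∪ F·t; in particular, 𝔖(δ) contains exactly two 1-dimensional nilpotent subalgebras, both contained in V. -/

import Mathlib

namespace JordanHalf

variable {F : Type*} [Field F]

/-- The multiplication of the spin factor `𝔖(δ)` with respect to the basis
`1 = ![1,0,0]`, `u = ![0,1,0]`, `v = ![0,0,1]`, where the bilinear form on `V = ⟨u,v⟩`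
satisfies `b(u,u) = 1 = b(v,v)` and `b(u,v) = δ`. -/
def SmulFun (δ : F) (x y : Fin 3 → F) : Fin 3 → F :=
  ![x 0 * y 0 + x 1 * y 1 + x 2 * y 2 + δ * (x 1 * y 2 + x 2 * y 1),
    x 0 * y 1 + y 0 * x 1,
    x 0 * y 2 + y 0 * x 2]

end JordanHalf

open JordanHalf

/-!
A square-zero element `α + x u + y v` of `𝔖(δ)` must have `α = 0` (the `V`-part of its square
is `2α(x u + y v)`), and then `x² + 2δxy + y² = 0`. If `ζ` is a root of `X² − 2δX + 1`, the other
root is `η = 2δ − ζ`, with `ζ + η = 2δ` and `ζη = 1`, so the form factors as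
`(y + ζx)(y + ηx)`. Its zeros are the two lines spanned by `u − ζv` and `u − ηv`, which are
distinct because `ζ = η` would force `δ² = 1`.
-/

namespace JordanHalf

variable {F : Type*} [Field F]

theorem smulFun_self (δ : F) (w : Fin 3 → F) :
    SmulFun δ w w =
      ![w 0 ^ 2 + w 1 ^ 2 + w 2 ^ 2 + 2 * δ * w 1 * w 2, 2 * w 0 * w 1, 2 * w 0 * w 2] := by
  ext i; fin_cases i <;> simp [SmulFun] <;> ring

theorem smulFun_self_eq_zero_iff (h2 : (2 : F) ≠ 0) (δ : F) (w : Fin 3 → F) :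
    SmulFun δ w w = 0 ↔ w 0 = 0 ∧ w 1 ^ 2 + 2 * δ * w 1 * w 2 + w 2 ^ 2 = 0 := by
  simp only [smulFun_self, Matrix.cons_eq_zero_iff, Matrix.zero_empty, and_true, mul_assoc,
    mul_eq_zero, h2, false_or]
  constructor
  · rintro ⟨hq, hw1, hw2⟩
    have hw0 : w 0 = 0 := by
      by_contra hw0
      have hw12 : w 1 = 0 ∧ w 2 = 0 := ⟨hw1.resolve_left hw0, hw2.resolve_left hw0⟩
      exact hw0 (pow_eq_zero_iff two_ne_zero |>.mp (by simpa [hw12] using hq))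
    exact ⟨hw0, by linear_combination hq - w 0 * hw0⟩
  · rintro ⟨hw0, hq⟩
    exact ⟨by linear_combination hq + w 0 * hw0, .inl hw0, .inl hw0⟩

def nilVec (ζ : F) : Fin 3 → F := ![0, 1, -ζ]

theorem smulFun_nilVec_self {δ ζ : F} (hζ : ζ ^ 2 - 2 * δ * ζ + 1 = 0) :
    SmulFun δ (nilVec ζ) (nilVec ζ) = 0 := by
  simp only [smulFun_self, nilVec, Matrix.cons_val_zero, Matrix.cons_val_one, Matrix.cons_val,
    Matrix.cons_eq_zero_iff, Matrix.zero_empty, and_true]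
  exact ⟨by linear_combination hζ, by ring, by ring⟩

theorem mem_span_nilVec {ζ : F} {w : Fin 3 → F} (hw0 : w 0 = 0) (hw : w 2 + ζ * w 1 = 0) :
    w ∈ Submodule.span F {nilVec ζ} := by
  have hw2 : w 2 = w 1 * -ζ := by linear_combination hw
  refine Submodule.mem_span_singleton.2 ⟨w 1, funext fun i => ?_⟩
  fin_cases i <;> simp [nilVec, hw0, hw2]

theorem linearIndependent_nilVec {ζ η : F} (h : ζ ≠ η) :
    LinearIndependent F ![nilVec ζ, nilVec η] := by
  refine LinearIndependent.pair_iff.2 fun a b hab => ?_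
  have h1 : a + b = 0 := by simpa [nilVec] using congrFun hab 1
  have h2 : -(a * ζ) + -(b * η) = 0 := by simpa [nilVec] using congrFun hab 2
  have ha : a * (ζ - η) = 0 := by linear_combination -h2 - η * h1
  have ha0 : a = 0 := (mul_eq_zero.1 ha).resolve_right (sub_ne_zero.2 h)
  exact ⟨ha0, by linear_combination h1 - ha0⟩

theorem ne_two_mul_sub_of_root (h2 : (2 : F) ≠ 0) {δ ζ : F} (hδ1 : δ ≠ 1) (hδ2 : δ ≠ -1)
    (hζ : ζ ^ 2 - 2 * δ * ζ + 1 = 0) : ζ ≠ 2 * δ - ζ := by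
  intro h
  have hζδ : ζ = δ := mul_left_cancel₀ h2 (by linear_combination h)
  subst hζδ
  have : (ζ - 1) * (ζ + 1) = 0 := by linear_combination -hζ
  rcases mul_eq_zero.1 this with h | h
  · exact hδ1 (by linear_combination h)
  · exact hδ2 (by linear_combination h)

end JordanHalf

/-- **Lemma (nilpotent basis, part (a)).** Suppose `char F ≠ 2`, `δ ≠ ±1`, and the
polynomial `x² − 2δx + 1` has its roots in `F`.  Then `𝔖(δ)` contains linearly
independent elements `s, t` of the subspace `V` (the elements with vanishing identity
component) with `s⬝s = 0 = t⬝t`, and every `w` with `w⬝w = 0` lies in `F·s ∪ F·t`;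
in particular `𝔖(δ)` has exactly two 1-dimensional nilpotent subalgebras, both in `V`. -/
theorem spin_nilpotent_lines {F : Type*} [Field F] (hchar : (2 : F) ≠ 0) (δ : F)
    (hδ1 : δ ≠ 1) (hδ2 : δ ≠ -1) (hroot : ∃ ζ : F, ζ ^ 2 - 2 * δ * ζ + 1 = 0) :
    ∃ s t : Fin 3 → F, s 0 = 0 ∧ t 0 = 0 ∧ LinearIndependent F ![s, t] ∧
      SmulFun δ s s = 0 ∧ SmulFun δ t t = 0 ∧
      ∀ w : Fin 3 → F, SmulFun δ w w = 0 →
        w ∈ Submodule.span F {s} ∨ w ∈ Submodule.span F {t} := by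
  obtain ⟨ζ, hζ⟩ := hroot
  have hη : (2 * δ - ζ) ^ 2 - 2 * δ * (2 * δ - ζ) + 1 = 0 := by linear_combination hζ
  refine ⟨nilVec ζ, nilVec (2 * δ - ζ), rfl, rfl,
    linearIndependent_nilVec (ne_two_mul_sub_of_root hchar hδ1 hδ2 hζ),
    smulFun_nilVec_self hζ, smulFun_nilVec_self hη, fun w hw => ?_⟩
  obtain ⟨hw0, hq⟩ := (smulFun_self_eq_zero_iff hchar δ w).1 hw
  have hfactor : (w 2 + ζ * w 1) * (w 2 + (2 * δ - ζ) * w 1) = 0 := by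
    linear_combination hq - w 1 ^ 2 * hζ
  rcases mul_eq_zero.1 hfactor with h | h
  · exact Or.inl (mem_span_nilVec hw0 h)
  · exact Or.inr (mem_span_nilVec hw0 h)
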